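/- arXiv:2106.09410 — 3 statements merged into one kernel-verified Lean document; each statement's English description precedes it below -/
import Mathlib

section
/- Let S be a real symmetric m×m matrix with spectral radius ρ, let v ∈ ℝ^m be nonzero, and for C > 0 let x*(C) be any maximizer of V(x) = x^T S x + v^T x over { x : x^T x ≤ C } with x*(C) ≠ 0. If C < (ε‖v‖/(2ρ))², with 0 < ε, then the cosine of the angle between x*(C) and v satisfies v^T x*(C) / (‖v‖·‖x*(C)‖) > 1 − ε. In particular, lim_{C→0⁺} ‖proj_v x*(C)‖ / ‖x*(C)‖ = 1. -/
/-!
Compare the maximizer `x` with the vector of the same length pointing along `v`. The quadratic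
part of `V` is at most `ρ‖x‖²` in absolute value on that sphere, while the linear part gains
`‖v‖‖x‖ - ⟪v, x⟫`; maximality forces `‖v‖‖x‖ - ⟪v, x⟫ ≤ 2ρ‖x‖²`, i.e.
`cos ∠(v, x) ≥ 1 - 2ρ‖x‖/‖v‖ ≥ 1 - 2ρ√C/‖v‖`, which tends to `1` as `C → 0⁺`.
-/

open Matrix InnerProductGeometry Filter Topology RealInnerProductSpace
open scoped MatrixOrder

theorem Matrix.IsHermitian.abs_dotProduct_mulVec_le {n : Type*} [Fintype n] [DecidableEq n]
    {S : Matrix n n ℝ} (hS : S.IsHermitian) {ρ : ℝ} (hρ : ∀ i, |hS.eigenvalues i| ≤ ρ)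
    (y : n → ℝ) : |y ⬝ᵥ S *ᵥ y| ≤ ρ * (y ⬝ᵥ y) := by
  have hspec : ∀ x ∈ spectrum ℝ S, |x| ≤ ρ := by
    rw [hS.spectrum_real_eq_range_eigenvalues]
    rintro _ ⟨i, rfl⟩
    exact hρ i
  have hup : S ≤ algebraMap ℝ _ ρ :=
    le_algebraMap_of_spectrum_le (fun x hx => (le_abs_self x).trans (hspec x hx)) hS.isSelfAdjoint
  have hlo : algebraMap ℝ _ (-ρ) ≤ S :=
    algebraMap_le_of_le_spectrum (fun x hx => neg_le_of_abs_le (hspec x hx)) hS.isSelfAdjoint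
  have h_up := (le_iff.mp hup).dotProduct_mulVec_nonneg y
  have h_lo := (le_iff.mp hlo).dotProduct_mulVec_nonneg y
  simp only [Algebra.algebraMap_eq_smul_one, sub_mulVec, smul_mulVec, one_mulVec, dotProduct_sub,
    dotProduct_smul, smul_eq_mul, star_trivial, sub_nonneg] at h_up h_lo
  exact abs_le.mpr ⟨by linarith, h_up⟩

section MaximizerAlignment

variable {E : Type*} [NormedAddCommGroup E] [InnerProductSpace ℝ E]

theorem le_inner_of_isMaxOn_sphere {q : E → ℝ} {ρ : ℝ} (hq : ∀ y, |q y| ≤ ρ * ‖y‖ ^ 2)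
    {v x : E} (hv : v ≠ 0)
    (hx : IsMaxOn (fun y => q y + ⟪v, y⟫) (Metric.sphere 0 ‖x‖) x) :
    ‖v‖ * ‖x‖ - 2 * ρ * ‖x‖ ^ 2 ≤ ⟪v, x⟫ := by
  have hv0 : 0 < ‖v‖ := norm_pos_iff.mpr hv
  set y := (‖x‖ / ‖v‖) • v
  have hy : ‖y‖ = ‖x‖ := by
    rw [norm_smul, Real.norm_of_nonneg (by positivity), div_mul_cancel₀ _ hv0.ne']
  have hvy : ⟪v, y⟫ = ‖v‖ * ‖x‖ := by
    rw [real_inner_smul_right, real_inner_self_eq_norm_sq]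
    field_simp
  have hcmp : q y + ⟪v, y⟫ ≤ q x + ⟪v, x⟫ := hx (by simpa using hy)
  have hqy := (abs_le.mp (hq y)).1
  have hqx := (abs_le.mp (hq x)).2
  rw [hy] at hqy
  linarith

theorem one_sub_le_cos_angle_of_isMaxOn_sphere {q : E → ℝ} {ρ : ℝ}
    (hq : ∀ y, |q y| ≤ ρ * ‖y‖ ^ 2) {v x : E} (hv : v ≠ 0) (hx0 : x ≠ 0)
    (hx : IsMaxOn (fun y => q y + ⟪v, y⟫) (Metric.sphere 0 ‖x‖) x) :
    1 - 2 * ρ * ‖x‖ / ‖v‖ ≤ Real.cos (angle v x) := by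
  have hv0 : 0 < ‖v‖ := norm_pos_iff.mpr hv
  have hxn : 0 < ‖x‖ := norm_pos_iff.mpr hx0
  rw [cos_angle, le_div_iff₀ (by positivity)]
  calc (1 - 2 * ρ * ‖x‖ / ‖v‖) * (‖v‖ * ‖x‖) = ‖v‖ * ‖x‖ - 2 * ρ * ‖x‖ ^ 2 := by
        field_simp
    _ ≤ ⟪v, x⟫ := le_inner_of_isMaxOn_sphere hq hv hx

end MaximizerAlignment

section EuclideanSpace

variable {ι : Type*} [Fintype ι]

theorem EuclideanSpace.sq_norm_eq_dotProduct (y : EuclideanSpace ℝ ι) :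
    ‖y‖ ^ 2 = y.ofLp ⬝ᵥ y.ofLp := by
  rw [← real_inner_self_eq_norm_sq, EuclideanSpace.inner_eq_star_dotProduct, star_trivial]

theorem norm_toLp_eq_sqrt_dotProduct (x : ι → ℝ) :
    ‖(WithLp.toLp 2 x : EuclideanSpace ℝ ι)‖ = √(x ⬝ᵥ x) := by
  rw [← EuclideanSpace.sq_norm_eq_dotProduct, Real.sqrt_sq (norm_nonneg _)]

theorem cos_angle_toLp (v x : ι → ℝ) :
    Real.cos (angle (WithLp.toLp 2 v : EuclideanSpace ℝ ι) (WithLp.toLp 2 x)) =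
      v ⬝ᵥ x / (√(v ⬝ᵥ v) * √(x ⬝ᵥ x)) := by
  rw [cos_angle, norm_toLp_eq_sqrt_dotProduct, norm_toLp_eq_sqrt_dotProduct,
    EuclideanSpace.inner_toLp_toLp, star_trivial, dotProduct_comm]

end EuclideanSpace

theorem Matrix.IsHermitian.one_sub_le_dotProduct_div_of_isMaxOn {ι : Type*} [Fintype ι]
    [DecidableEq ι] {S : Matrix ι ι ℝ} (hS : S.IsHermitian) {ρ : ℝ}
    (hρ : ∀ i, |hS.eigenvalues i| ≤ ρ) {v x : ι → ℝ} (hv : v ≠ 0) (hx0 : x ≠ 0) {C : ℝ}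
    (hxC : x ⬝ᵥ x ≤ C) (hx : IsMaxOn (fun y => y ⬝ᵥ S *ᵥ y + v ⬝ᵥ y) {y | y ⬝ᵥ y ≤ C} x) :
    1 - 2 * ρ * √C / √(v ⬝ᵥ v) ≤ v ⬝ᵥ x / (√(v ⬝ᵥ v) * √(x ⬝ᵥ x)) := by
  have hρ0 : 0 ≤ ρ := by
    obtain ⟨i, -⟩ := Function.ne_iff.mp hx0
    exact (abs_nonneg _).trans (hρ i)
  have hq (y : EuclideanSpace ℝ ι) : |y.ofLp ⬝ᵥ S *ᵥ y.ofLp| ≤ ρ * ‖y‖ ^ 2 := by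
    rw [EuclideanSpace.sq_norm_eq_dotProduct]
    exact hS.abs_dotProduct_mulVec_le hρ _
  have hx' : IsMaxOn (fun y : EuclideanSpace ℝ ι => y.ofLp ⬝ᵥ S *ᵥ y.ofLp + ⟪WithLp.toLp 2 v, y⟫)
      (Metric.sphere 0 ‖WithLp.toLp 2 x‖) (WithLp.toLp 2 x) := by
    intro y hy
    have hyC : y.ofLp ⬝ᵥ y.ofLp ≤ C := by
      rwa [← EuclideanSpace.sq_norm_eq_dotProduct, mem_sphere_zero_iff_norm.mp hy,
        EuclideanSpace.sq_norm_eq_dotProduct]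
    simpa only [EuclideanSpace.inner_toLp_toLp, EuclideanSpace.inner_eq_star_dotProduct,
      star_trivial, dotProduct_comm _ v, Set.mem_ofPred_eq] using hx hyC
  rw [← cos_angle_toLp, ← norm_toLp_eq_sqrt_dotProduct v]
  refine le_trans ?_ (one_sub_le_cos_angle_of_isMaxOn_sphere hq (by simpa using hv)
    (by simpa using hx0) hx')
  rw [norm_toLp_eq_sqrt_dotProduct x]
  gcongr

/-- For small budgets the maximizer `x*(C)` aligns with `v`: if
`C < (ε‖v‖/(2ρ))²` then the cosine between `x*(C)` and `v` exceeds `1 − ε`, and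
`‖proj_v x*(C)‖/‖x*(C)‖ → 1` as `C → 0⁺`. -/
theorem stmt_5 {m : ℕ} (S : Matrix (Fin m) (Fin m) ℝ) (hS : S.IsHermitian)
    (ρ : ℝ) (hρ : IsGreatest (Set.range fun i => |hS.eigenvalues i|) ρ)
    (v : Fin m → ℝ) (hv : v ≠ 0)
    (xstar : ℝ → Fin m → ℝ)
    (hmax : ∀ C > 0, (xstar C) ⬝ᵥ (xstar C) ≤ C ∧
      ∀ y : Fin m → ℝ, y ⬝ᵥ y ≤ C →
        y ⬝ᵥ S.mulVec y + v ⬝ᵥ y ≤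
          (xstar C) ⬝ᵥ S.mulVec (xstar C) + v ⬝ᵥ (xstar C))
    (hne : ∀ C > 0, xstar C ≠ 0) :
    (∀ ε > 0, ∀ C, 0 < C → C < (ε * Real.sqrt (v ⬝ᵥ v) / (2 * ρ)) ^ 2 →
      1 - ε < v ⬝ᵥ xstar C /
        (Real.sqrt (v ⬝ᵥ v) * Real.sqrt ((xstar C) ⬝ᵥ (xstar C)))) ∧
    Filter.Tendsto
      (fun C => |v ⬝ᵥ xstar C| /
        (Real.sqrt (v ⬝ᵥ v) * Real.sqrt ((xstar C) ⬝ᵥ (xstar C))))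
      (nhdsWithin 0 (Set.Ioi 0)) (nhds 1) := by
  have hnv : 0 < √(v ⬝ᵥ v) := by
    rw [← norm_toLp_eq_sqrt_dotProduct]
    simpa using hv
  have hcos (C : ℝ) (hC : 0 < C) : 1 - 2 * ρ * √C / √(v ⬝ᵥ v) ≤
      v ⬝ᵥ xstar C / (√(v ⬝ᵥ v) * √(xstar C ⬝ᵥ xstar C)) :=
    hS.one_sub_le_dotProduct_div_of_isMaxOn (fun i => hρ.2 ⟨i, rfl⟩) hv (hne C hC)
      (hmax C hC).1 (isMaxOn_iff.mpr (hmax C hC).2)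
  refine ⟨fun ε hε C hC hCε => ?_, ?_⟩
  · -- for `ρ = 0` the hypothesis reads `C < (_ / 0) ^ 2 = 0`
    have hρpos : 0 < ρ := by
      obtain ⟨i, hi⟩ := hρ.1
      refine lt_of_le_of_ne (hi ▸ abs_nonneg _) fun h => ?_
      rw [← h] at hCε
      norm_num at hCε
      linarith
    have hsmall : 2 * ρ * √C / √(v ⬝ᵥ v) < ε := by
      rw [div_lt_iff₀ hnv, ← lt_div_iff₀' (by positivity)]
      exact (Real.sqrt_lt' (by positivity)).mpr hCε
    linarith [hcos C hC]
  · have hlow : Tendsto (fun C : ℝ => 1 - 2 * ρ * √C / √(v ⬝ᵥ v)) (𝓝[>] 0) (𝓝 1) := by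
      have hcont : Continuous fun C : ℝ => 1 - 2 * ρ * √C / √(v ⬝ᵥ v) := by fun_prop
      simpa using (hcont.tendsto 0).mono_left nhdsWithin_le_nhds
    refine tendsto_of_tendsto_of_tendsto_of_le_of_le' hlow tendsto_const_nhds ?_ ?_ <;>
      filter_upwards [self_mem_nhdsWithin] with C hC
    · exact (hcos C hC).trans (div_le_div_of_nonneg_right (le_abs_self _) (by positivity))
    · rw [← abs_of_nonneg (by positivity : 0 ≤ √(v ⬝ᵥ v) * √(xstar C ⬝ᵥ xstar C)), ← abs_div,
        ← cos_angle_toLp]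
      exact Real.abs_cos_le_one _
end

section
/- Let P be the kn×kn matrix P = ((1−β)/2)·I_k ⊗ M₋² + (1/(2k))·J_k ⊗ ((1+(k−1)β)M₊² − (1−β)M₋²), where M₊ = ((1+(k−1)β)I_n − δG)^{-1} and M₋ = ((1−β)I_n − δG)^{-1}, G real symmetric with eigenvalues μ_1,…,μ_n, and assume 1+(k−1)β − δμ_i > 0 and 1−β − δμ_i > 0 for all i. Then the eigenvalues of P are exactly: (1+(k−1)β)/(2(1+(k−1)β−δμ_i)²) (each with the multiplicity of μ_i), and (1−β)/(2(1−β−δμ_i)²) (each with multiplicity (k−1) times that of μ_i), for i = 1,…,n. -/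
/-!
Diagonalise `G = V diag(μ) Vᵀ` and the all-ones matrix `J_k = U diag(λ) Uᵀ` by orthogonal
matrices. Then `M₊²` and `M₋²` are `V`-conjugates of diagonal matrices, so `P` is the
`(U ⊗ V)`-conjugate of the diagonal matrix whose `(j, i)` entry is
`(1−β)/(2(1−β−δμᵢ)²) + λⱼ/(2k) · ((1+(k−1)β)/(1+(k−1)β−δμᵢ)² − (1−β)/(1−β−δμᵢ)²)`.
The characteristic polynomial of `J_k` is `X^(k−1) (X − k)`, so `λⱼ = k` once and `λⱼ = 0`
with multiplicity `k − 1`, and these two values give the two families of eigenvalues.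
-/

open Matrix Kronecker Polynomial Unitary

namespace Multiset

theorem nsmul_bind {α β : Type*} (s : Multiset α) (f : α → Multiset β) (n : ℕ) :
    (n • s).bind f = n • s.bind f := by
  induction n with
  | zero => simp
  | succ n ih => simp [succ_nsmul, add_bind, ih]

theorem map_univ_prod_eq_bind {α β γ δ : Type*} [Fintype α] [Fintype β]
    (a : α → γ) (f : γ → β → δ) :
    Finset.univ.val.map (fun p : α × β => f (a p.1) p.2) =
      (Finset.univ.val.map a).bind fun x => Finset.univ.val.map (f x) := by
  rw [bind_map, ← Finset.univ_product_univ, Finset.product_val]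
  simp [SProd.sprod, Multiset.product, map_bind]

end Multiset

namespace Matrix

variable {m n : Type*}

theorem isHermitian_allOnes {R : Type*} [Semiring R] [StarRing R] :
    (of fun _ _ : n => (1 : R)).IsHermitian := by
  ext; simp

variable [Fintype m] [DecidableEq m] [Fintype n] [DecidableEq n]

theorem charpoly_allOnes {R : Type*} [CommRing R] [Nonempty n] :
    (of fun _ _ : n => (1 : R)).charpoly =
      X ^ (Fintype.card n - 1) * (X - C (Fintype.card n : R)) := by
  have : (of fun _ _ : n => (1 : R)) = vecMulVec 1 1 := by ext; simp [vecMulVec]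
  rw [this, charpoly_vecMulVec, mul_sub, ← pow_succ, Nat.sub_add_cancel Fintype.card_pos]
  simp [smul_eq_C_mul, mul_comm]

theorem roots_charpoly_diagonal {R : Type*} [CommRing R] [IsDomain R] (d : n → R) :
    (diagonal d).charpoly.roots = Finset.univ.val.map d := by
  rw [charpoly_diagonal,
    roots_prod _ _ (by simp [Finset.prod_ne_zero_iff, X_sub_C_ne_zero])]
  simp

theorem IsHermitian.map_eigenvalues_eq_roots_charpoly {A : Matrix n n ℝ} (hA : A.IsHermitian) :
    Finset.univ.val.map hA.eigenvalues = A.charpoly.roots := by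
  simp [hA.roots_charpoly_eq_eigenvalues]

theorem eigenvalues_allOnes {𝕜 : Type*} [RCLike 𝕜] [Nonempty n] :
    Finset.univ.val.map (isHermitian_allOnes (n := n) (R := 𝕜)).eigenvalues =
      (Fintype.card n : ℝ) ::ₘ (Fintype.card n - 1) • {0} := by
  apply Multiset.map_injective (RCLike.ofReal_injective (K := 𝕜))
  rw [Multiset.map_map, ← IsHermitian.roots_charpoly_eq_eigenvalues, charpoly_allOnes,
    roots_mul (mul_ne_zero (pow_ne_zero _ X_ne_zero) (X_sub_C_ne_zero _)), roots_X_pow,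
    roots_X_sub_C]
  simp [add_comm, Multiset.map_nsmul]

section Conj

variable {R : Type*} [CommRing R] [StarRing R]

theorem charpoly_conjStarAlgAut (U : unitary (Matrix n n R)) (A : Matrix n n R) :
    (conjStarAlgAut R _ U A).charpoly = A.charpoly := by
  rw [conjStarAlgAut_apply, charpoly_mul_comm, ← mul_assoc, star_mul_self_of_mem U.2, one_mul]

theorem conjStarAlgAut_kronecker (U : unitary (Matrix m m R)) (V : unitary (Matrix n n R))
    (A : Matrix m m R) (B : Matrix n n R) :
    conjStarAlgAut R _ U A ⊗ₖ conjStarAlgAut R _ V B =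
      conjStarAlgAut R _ ⟨(U : Matrix m m R) ⊗ₖ (V : Matrix n n R),
        kronecker_mem_unitary U.2 V.2⟩ (A ⊗ₖ B) := by
  simp only [conjStarAlgAut_apply, star_eq_conjTranspose, mul_kronecker_mul,
    conjTranspose_kronecker]

end Conj

section Field

variable {K : Type*} [Field K] [StarRing K]

theorem inv_conjStarAlgAut_diagonal (U : unitary (Matrix n n K)) {d : n → K}
    (hd : ∀ i, d i ≠ 0) :
    (conjStarAlgAut K _ U (diagonal d))⁻¹ = conjStarAlgAut K _ U (diagonal d⁻¹) := by
  refine inv_eq_left_inv ?_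
  rw [← map_mul, diagonal_mul_diagonal]
  simp [hd]

theorem roots_charpoly_smul_one_kronecker_add_smul_kronecker (U : unitary (Matrix m m K))
    (V : unitary (Matrix n n K)) (a : m → K) (b c : n → K) (s t : K) :
    (s • ((1 : Matrix m m K) ⊗ₖ conjStarAlgAut K _ V (diagonal c)) +
        t • (conjStarAlgAut K _ U (diagonal a) ⊗ₖ conjStarAlgAut K _ V (diagonal b))
      ).charpoly.roots =
      (Finset.univ.val.map a).bind fun x =>
        Finset.univ.val.map fun i => s * c i + t * (x * b i) := by
  rw [← map_one (conjStarAlgAut K _ U), conjStarAlgAut_kronecker, conjStarAlgAut_kronecker,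
    ← map_smul, ← map_smul, ← map_add, charpoly_conjStarAlgAut]
  simp only [← diagonal_one, ← diagonal_smul, diagonal_kronecker_diagonal, diagonal_add]
  rw [roots_charpoly_diagonal, ← Multiset.map_univ_prod_eq_bind]
  simp

end Field

theorem IsHermitian.smul_one_sub_smul_eq {G : Matrix n n ℝ} (hG : G.IsHermitian) (a δ : ℝ) :
    a • 1 - δ • G = conjStarAlgAut ℝ _ hG.eigenvectorUnitary
      (diagonal fun i => a - δ * hG.eigenvalues i) := by
  conv_lhs => rw [hG.spectral_theorem, ← map_one (conjStarAlgAut ℝ _ hG.eigenvectorUnitary)]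
  rw [← map_smul, ← map_smul, ← map_sub]
  congr 1
  ext i j
  rcases eq_or_ne i j with rfl | hij <;> simp [*]

theorem IsHermitian.inv_smul_one_sub_smul_sq {G : Matrix n n ℝ} (hG : G.IsHermitian) {a δ : ℝ}
    (h : ∀ i, a - δ * hG.eigenvalues i ≠ 0) :
    (a • 1 - δ • G)⁻¹ ^ 2 = conjStarAlgAut ℝ _ hG.eigenvectorUnitary
      (diagonal fun i => (a - δ * hG.eigenvalues i)⁻¹ ^ 2) := by
  rw [hG.smul_one_sub_smul_eq, inv_conjStarAlgAut_diagonal _ h, ← map_pow, diagonal_pow]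
  rfl

end Matrix

/-- The multiset of eigenvalues of
`P = ((1−β)/2)·I_k ⊗ M₋² + (1/(2k))·J_k ⊗ ((1+(k−1)β)M₊² − (1−β)M₋²)` consists of
`(1+(k−1)β)/(2(1+(k−1)β−δμᵢ)²)` (with the multiplicity of `μᵢ`) and
`(1−β)/(2(1−β−δμᵢ)²)` (with multiplicity `k−1` times that of `μᵢ`). -/
theorem stmt_12 {n : ℕ} (k : ℕ) (hk : 2 ≤ k) (β δ : ℝ)
    (G : Matrix (Fin n) (Fin n) ℝ) (hG : G.IsHermitian)
    (hpos : ∀ i, 1 + ((k : ℝ) - 1) * β - δ * hG.eigenvalues i > 0 ∧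
      1 - β - δ * hG.eigenvalues i > 0)
    (P : Matrix (Fin k × Fin n) (Fin k × Fin n) ℝ)
    (hPdef : P =
      ((1 - β) / 2) • ((1 : Matrix (Fin k) (Fin k) ℝ) ⊗ₖ
        ((((1 - β) • (1 : Matrix (Fin n) (Fin n) ℝ) - δ • G)⁻¹) ^ 2)) +
      (1 / (2 * (k : ℝ))) • ((Matrix.of fun _ _ => (1 : ℝ) : Matrix (Fin k) (Fin k) ℝ) ⊗ₖ
        ((1 + ((k : ℝ) - 1) * β) •
            ((((1 + ((k : ℝ) - 1) * β) • (1 : Matrix (Fin n) (Fin n) ℝ) - δ • G)⁻¹) ^ 2) -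
          (1 - β) • ((((1 - β) • (1 : Matrix (Fin n) (Fin n) ℝ) - δ • G)⁻¹) ^ 2))))
    (hP : P.IsHermitian) :
    Multiset.map hP.eigenvalues Finset.univ.val =
      Multiset.map (fun i : Fin n =>
        (1 + ((k : ℝ) - 1) * β) /
          (2 * (1 + ((k : ℝ) - 1) * β - δ * hG.eigenvalues i) ^ 2)) Finset.univ.val +
      (k - 1) • Multiset.map (fun i : Fin n =>
        (1 - β) / (2 * (1 - β - δ * hG.eigenvalues i) ^ 2)) Finset.univ.val := by
  have : Nonempty (Fin k) := ⟨⟨0, by omega⟩⟩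
  have hJ := isHermitian_allOnes (n := Fin k) (R := ℝ)
  have hM_plus := hG.inv_smul_one_sub_smul_sq fun i => (hpos i).1.ne'
  have hM_minus := hG.inv_smul_one_sub_smul_sq fun i => (hpos i).2.ne'
  rw [hP.map_eigenvalues_eq_roots_charpoly, hPdef, hM_plus, hM_minus, ← map_smul, ← map_smul,
    ← map_sub, ← diagonal_smul, ← diagonal_smul, diagonal_sub, hJ.spectral_theorem,
    roots_charpoly_smul_one_kronecker_add_smul_kronecker, RCLike.ofReal_real_eq_id,
    Function.id_comp, eigenvalues_allOnes, Multiset.cons_bind, Multiset.nsmul_bind,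
    Multiset.singleton_bind, Fintype.card_fin]
  congr 2
  · funext i
    have := (hpos i).1.ne'
    simp only [Pi.smul_apply, smul_eq_mul]
    field_simp
    ring
  · congr 2
    funext i
    have := (hpos i).2.ne'
    simp only [zero_mul, mul_zero, add_zero]
    field_simp
end

section
/- Let P be a real symmetric kn×kn positive-semidefinite matrix written in block form with blocks P^{L} consisting of the first ln rows (1 ≤ l ≤ k), and let â ∈ ℝ^{kn} with P·â ≠ 0. Define for C > 0: W*(l, C) = max over a ∈ ℝ^{kn} with a^s = â^s for s > l and ‖a − â‖² ≤ C of a^T P a, and Ŵ = â^T P â. Then lim_{C→0⁺} (W*(l, C) − Ŵ)/√C = 2·‖P^{L}·â‖. Consequently, if â^1 = â^2 = ⋯ = â^k (blockwise equal) and P has the block structure P = I_k ⊗ Y' + (J_k − I_k) ⊗ Z' with Y', Z' symmetric, then lim_{C→0⁺} (W*(l,C) − Ŵ)/(W*(k,C) − Ŵ) = √(l/k). -/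
/-!
Write `b = P â` and let `N` be the squared norm of the part of `b` that lies in the free
coordinates. Expanding `a = â + d` gives `aᵀPa = Ŵ + 2 dᵀb + dᵀPd`. With the budget `‖d‖² ≤ C`,
Cauchy–Schwarz bounds `dᵀb` by `√C √N`, with equality at `d = (√C/√N)·b|_free`, while the
quadratic term lies between `0` (positive semidefiniteness) and `O(C)`. Hence
`W*(l,C) = Ŵ + 2√(CN) + O(C)`. For the Kronecker structure `b` is constant across blocks, so
`N = l·‖b¹‖²`, and the ratio of the rates is `√(l/k)`.
-/

open Matrix Kronecker Filter Topology

section QuadraticForm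

variable {ι : Type*} [Fintype ι]

lemma Matrix.IsSymm.dotProduct_mulVec_comm {P : Matrix ι ι ℝ} (hP : P.IsSymm) (x y : ι → ℝ) :
    x ⬝ᵥ P *ᵥ y = y ⬝ᵥ P *ᵥ x := by
  rw [dotProduct_mulVec, dotProduct_comm, ← vecMul_transpose, hP.eq]

lemma Matrix.IsSymm.dotProduct_mulVec_add_add {P : Matrix ι ι ℝ} (hP : P.IsSymm)
    (x d : ι → ℝ) :
    (x + d) ⬝ᵥ P *ᵥ (x + d) = x ⬝ᵥ P *ᵥ x + 2 * (d ⬝ᵥ P *ᵥ x) + d ⬝ᵥ P *ᵥ d := by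
  rw [mulVec_add, add_dotProduct, dotProduct_add, dotProduct_add,
    hP.dotProduct_mulVec_comm x d]
  ring

lemma abs_le_sqrt_dotProduct_self (d : ι → ℝ) (i : ι) : |d i| ≤ √(d ⬝ᵥ d) :=
  Real.abs_le_sqrt <| by
    simpa only [sq, dotProduct] using
      Finset.single_le_sum (fun j _ => mul_self_nonneg (d j)) (Finset.mem_univ i)

lemma dotProduct_mulVec_self_le (P : Matrix ι ι ℝ) (d : ι → ℝ) :
    d ⬝ᵥ P *ᵥ d ≤ (∑ i, ∑ j, |P i j|) * (d ⬝ᵥ d) := by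
  set D := d ⬝ᵥ d
  have hD : √D * √D = D := Real.mul_self_sqrt (dotProduct_self_star_nonneg d)
  simp only [dotProduct, mulVec, Finset.mul_sum, Finset.sum_mul]
  refine Finset.sum_le_sum fun i _ => Finset.sum_le_sum fun j _ => ?_
  calc d i * (P i j * d j) ≤ |P i j| * (|d i| * |d j|) := by
        rw [← abs_mul, ← abs_mul, mul_left_comm]; exact le_abs_self _
    _ ≤ |P i j| * (√D * √D) := by
        gcongr <;> exact abs_le_sqrt_dotProduct_self d _
    _ = |P i j| * D := by rw [hD]

end QuadraticForm

section Perturbation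

variable {ι : Type*} [Fintype ι] (p : ι → Prop) [DecidablePred p]

lemma dotProduct_le_sqrt_mul_sqrt_of_forall_not_eq_zero {d : ι → ℝ}
    (hd : ∀ i, ¬ p i → d i = 0) (b : ι → ℝ) :
    d ⬝ᵥ b ≤ √(d ⬝ᵥ d) * √(∑ i, if p i then b i ^ 2 else 0) := by
  have hdb : d ⬝ᵥ b = ∑ i, d i * (if p i then b i else 0) := by
    refine Finset.sum_congr rfl fun i _ => ?_
    split_ifs with hi
    · rfl
    · simp [hd i hi]
  have hsq : ∀ i, (if p i then b i else 0) ^ 2 = if p i then b i ^ 2 else 0 := fun i => by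
    split_ifs <;> simp
  calc d ⬝ᵥ b = ∑ i, d i * (if p i then b i else 0) := hdb
    _ ≤ √(∑ i, d i ^ 2) * √(∑ i, (if p i then b i else 0) ^ 2) :=
      Real.sum_mul_le_sqrt_mul_sqrt _ _ _
    _ = √(d ⬝ᵥ d) * √(∑ i, if p i then b i ^ 2 else 0) := by
      simp only [hsq, dotProduct, sq]

def perturbedValues (P : Matrix ι ι ℝ) (ahat : ι → ℝ) (C : ℝ) : Set ℝ :=
  {y | ∃ a : ι → ℝ, (∀ i, ¬ p i → a i = ahat i) ∧
    (a - ahat) ⬝ᵥ (a - ahat) ≤ C ∧ y = a ⬝ᵥ P *ᵥ a}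

variable {p} {P : Matrix ι ι ℝ} {ahat : ι → ℝ} {C : ℝ}

lemma le_of_mem_perturbedValues (hP : P.IsSymm) {y : ℝ} (hy : y ∈ perturbedValues p P ahat C) :
    y ≤ ahat ⬝ᵥ P *ᵥ ahat + 2 * (√C * √(∑ i, if p i then (P *ᵥ ahat) i ^ 2 else 0))
      + (∑ i, ∑ j, |P i j|) * C := by
  obtain ⟨a, hfixed, hC, rfl⟩ := hy
  obtain ⟨d, rfl⟩ : ∃ d, a = ahat + d := ⟨a - ahat, by abel⟩
  rw [add_sub_cancel_left] at hC
  have hd : ∀ i, ¬ p i → d i = 0 := fun i hi => by simpa using hfixed i hi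
  have hlin := (dotProduct_le_sqrt_mul_sqrt_of_forall_not_eq_zero p hd (P *ᵥ ahat)).trans
    (mul_le_mul_of_nonneg_right (Real.sqrt_le_sqrt hC) (Real.sqrt_nonneg _))
  have hquad := (dotProduct_mulVec_self_le P d).trans
    (mul_le_mul_of_nonneg_left hC (by positivity))
  rw [hP.dotProduct_mulVec_add_add]
  linarith

lemma exists_mem_perturbedValues_le (hP : P.PosSemidef) (hC : 0 ≤ C) :
    ∃ y ∈ perturbedValues p P ahat C,
      ahat ⬝ᵥ P *ᵥ ahat + 2 * (√C * √(∑ i, if p i then (P *ᵥ ahat) i ^ 2 else 0)) ≤ y := by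
  set b := P *ᵥ ahat
  set N := ∑ i, if p i then b i ^ 2 else 0
  set bl : ι → ℝ := fun i => if p i then b i else 0
  have hblbl : bl ⬝ᵥ bl = N := Finset.sum_congr rfl fun i _ => by
    simp only [bl]; split_ifs <;> simp [sq]
  have hblb : bl ⬝ᵥ b = N := Finset.sum_congr rfl fun i _ => by
    simp only [bl]; split_ifs <;> simp [sq]
  -- The maximiser of `d ⬝ᵥ b` on the ball; for `N = 0` the junk value `t = 0` gives `d = 0`.
  set t := √C / √N
  have htN : t * N = √C * √N := by rw [div_mul_eq_mul_div, mul_div_assoc, Real.div_sqrt]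
  have htt : t * (t * N) ≤ C :=
    calc t * (t * N) = (√C * √C) * (√N / √N) := by rw [htN]; ring
      _ ≤ C := by
        rw [Real.mul_self_sqrt hC]; exact mul_le_of_le_one_right hC (div_self_le_one _)
  refine ⟨(ahat + t • bl) ⬝ᵥ P *ᵥ (ahat + t • bl), ⟨ahat + t • bl, fun i hi => ?_, ?_, rfl⟩, ?_⟩
  · simp [bl, hi]
  · rwa [add_sub_cancel_left, smul_dotProduct, dotProduct_smul, hblbl, smul_eq_mul, smul_eq_mul]
  · rw [(isHermitian_iff_isSymm.mp hP.isHermitian).dotProduct_mulVec_add_add, smul_dotProduct,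
      hblb, smul_eq_mul, htN]
    exact le_add_of_nonneg_right (by simpa using hP.dotProduct_mulVec_nonneg (t • bl))

end Perturbation

lemma tendsto_div_sqrt_of_le_of_le {g : ℝ → ℝ} {L M : ℝ}
    (hlow : ∀ C > 0, L * √C ≤ g C) (hup : ∀ C > 0, g C ≤ L * √C + M * C) :
    Tendsto (fun C => g C / √C) (𝓝[>] 0) (𝓝 L) := by
  have hsqrt : Tendsto (fun C : ℝ => L + M * √C) (𝓝[>] 0) (𝓝 L) := by
    simpa using (tendsto_const_nhds.add (tendsto_const_nhds.mul
      (Real.continuous_sqrt.tendsto' 0 0 Real.sqrt_zero))).mono_left nhdsWithin_le_nhds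
  refine tendsto_of_tendsto_of_tendsto_of_le_of_le' tendsto_const_nhds hsqrt ?_ ?_ <;>
    filter_upwards [self_mem_nhdsWithin] with C (hC : 0 < C)
  · rw [le_div_iff₀ (Real.sqrt_pos.2 hC)]; exact hlow C hC
  · rw [div_le_iff₀ (Real.sqrt_pos.2 hC), add_mul, mul_assoc, Real.mul_self_sqrt hC.le]
    exact hup C hC

theorem tendsto_sub_div_sqrt_of_isGreatest_perturbedValues {ι : Type*} [Fintype ι] {p : ι → Prop}
    [DecidablePred p] {P : Matrix ι ι ℝ} (hP : P.PosSemidef) {ahat : ι → ℝ} {W : ℝ → ℝ}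
    (hW : ∀ C > 0, IsGreatest (perturbedValues p P ahat C) (W C)) :
    Tendsto (fun C => (W C - ahat ⬝ᵥ P *ᵥ ahat) / √C) (𝓝[>] 0)
      (𝓝 (2 * √(∑ i, if p i then (P *ᵥ ahat) i ^ 2 else 0))) := by
  refine tendsto_div_sqrt_of_le_of_le (M := ∑ i, ∑ j, |P i j|) (fun C hC => ?_) (fun C hC => ?_)
  · obtain ⟨y, hy, hle⟩ := exists_mem_perturbedValues_le (p := p) (ahat := ahat) hP hC.le
    linarith [(hW C hC).2 hy]
  · linarith [le_of_mem_perturbedValues (isHermitian_iff_isSymm.mp hP.isHermitian) (hW C hC).1]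

def IsBlockConst {κ ι : Type*} (v : κ × ι → ℝ) : Prop := ∀ s t i, v (s, i) = v (t, i)

lemma mulVec_apply_of_isBlockConst {κ ι : Type*} [Fintype κ] [Fintype ι]
    (P : Matrix (κ × ι) (κ × ι) ℝ) {a : κ × ι → ℝ} (ha : IsBlockConst a) (s₀ : κ) (x : κ × ι) :
    (P *ᵥ a) x = ∑ j, (∑ t, P x (t, j)) * a (s₀, j) := by
  simp only [mulVec, dotProduct, Fintype.sum_prod_type, Finset.sum_mul]
  rw [Finset.sum_comm]
  exact Finset.sum_congr rfl fun j _ => Finset.sum_congr rfl fun t _ => by rw [ha t s₀ j]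

lemma sum_kronecker_one_add_ones_sub_one_apply {κ ι : Type*} [Fintype κ] [DecidableEq κ]
    (Y Z : Matrix ι ι ℝ) (s : κ) (i j : ι) :
    ∑ t, ((1 : Matrix κ κ ℝ) ⊗ₖ Y + (of (fun _ _ => (1 : ℝ)) - 1) ⊗ₖ Z :
      Matrix (κ × ι) (κ × ι) ℝ) (s, i) (t, j) = Y i j + (Fintype.card κ - 1) * Z i j := by
  simp only [Matrix.add_apply, kroneckerMap_apply, one_apply, Matrix.sub_apply, of_apply,
    sub_mul, one_mul, ite_mul, zero_mul, Finset.sum_add_distrib, Finset.sum_sub_distrib,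
    Finset.sum_ite_eq, Finset.mem_univ, if_true, Finset.sum_const, Finset.card_univ,
    nsmul_eq_mul]

lemma isBlockConst_kronecker_mulVec {κ ι : Type*} [Fintype κ] [Fintype ι] [DecidableEq κ]
    (Y Z : Matrix ι ι ℝ) {a : κ × ι → ℝ} (ha : IsBlockConst a) :
    IsBlockConst (((1 : Matrix κ κ ℝ) ⊗ₖ Y + (of (fun _ _ => (1 : ℝ)) - 1) ⊗ₖ Z) *ᵥ a) := by
  intro s t i
  rw [mulVec_apply_of_isBlockConst _ ha s, mulVec_apply_of_isBlockConst _ ha s]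
  simp only [sum_kronecker_one_add_ones_sub_one_apply]

lemma sum_sq_pos_of_isBlockConst {κ ι : Type*} [Fintype ι] {b : κ × ι → ℝ} (hb : IsBlockConst b)
    (hb0 : b ≠ 0) (s₀ : κ) : 0 < ∑ i, b (s₀, i) ^ 2 := by
  obtain ⟨⟨t, i⟩, hti⟩ := Function.ne_iff.mp hb0
  refine Finset.sum_pos' (fun _ _ => sq_nonneg _) ⟨i, Finset.mem_univ _, ?_⟩
  rw [hb s₀ t]
  exact sq_pos_of_ne_zero hti

lemma sum_ite_fst_lt_sq_of_isBlockConst {k n : ℕ} {b : Fin k × Fin n → ℝ}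
    (hb : IsBlockConst b) (s₀ : Fin k) {l : ℕ} (hl : l ≤ k) :
    ∑ x : Fin k × Fin n, (if (x.1 : ℕ) < l then b x ^ 2 else 0) = l * ∑ i, b (s₀, i) ^ 2 :=
  calc ∑ x : Fin k × Fin n, (if (x.1 : ℕ) < l then b x ^ 2 else 0)
      = ∑ s : Fin k, if (s : ℕ) < l then ∑ i, b (s₀, i) ^ 2 else 0 := by
        rw [Fintype.sum_prod_type]
        refine Finset.sum_congr rfl fun s _ => ?_
        simp only [hb s s₀, Finset.sum_ite_irrel, Finset.sum_const_zero]
    _ = l * ∑ i, b (s₀, i) ^ 2 := by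
        rw [← Finset.sum_filter, Finset.sum_const, Fin.card_filter_val_lt, min_eq_right hl,
          nsmul_eq_mul]

lemma Filter.Tendsto.div_of_div {α : Type*} {l : Filter α} {f g h : α → ℝ} {a b : ℝ}
    (hf : Tendsto (fun x => f x / h x) l (𝓝 a)) (hg : Tendsto (fun x => g x / h x) l (𝓝 b))
    (hb : b ≠ 0) (hh : ∀ᶠ x in l, h x ≠ 0) :
    Tendsto (fun x => f x / g x) l (𝓝 (a / b)) :=
  (hf.div hg hb).congr' <| hh.mono fun _ hx => div_div_div_cancel_right₀ hx _ _

/-- Small-budget rate of the partial-intervention welfare: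
`(W*(l,C) − Ŵ)/√C → 2‖P^L â‖` as `C → 0⁺`, and, when the blocks of `â` are equal
and `P = I_k ⊗ Y' + (J_k − I_k) ⊗ Z'`, the ratio
`(W*(l,C) − Ŵ)/(W*(k,C) − Ŵ) → √(l/k)`. -/
theorem stmt_19 {n : ℕ} (k : ℕ) (hk : 1 ≤ k)
    (P : Matrix (Fin k × Fin n) (Fin k × Fin n) ℝ) (hP : P.PosSemidef)
    (ahat : Fin k × Fin n → ℝ) (hPa : P.mulVec ahat ≠ 0)
    (Wstar : ℕ → ℝ → ℝ)
    (hW : ∀ l C, 1 ≤ l → l ≤ k → 0 < C →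
      IsGreatest {y | ∃ a : Fin k × Fin n → ℝ,
        (∀ pr : Fin k × Fin n, l ≤ (pr.1 : ℕ) → a pr = ahat pr) ∧
        (a - ahat) ⬝ᵥ (a - ahat) ≤ C ∧ y = a ⬝ᵥ P.mulVec a} (Wstar l C)) :
    (∀ l, 1 ≤ l → l ≤ k →
      Filter.Tendsto (fun C => (Wstar l C - ahat ⬝ᵥ P.mulVec ahat) / Real.sqrt C)
        (nhdsWithin 0 (Set.Ioi 0))
        (nhds (2 * Real.sqrt (∑ pr : Fin k × Fin n,
          if (pr.1 : ℕ) < l then (P.mulVec ahat pr) ^ 2 else 0)))) ∧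
    ((∀ s t : Fin k, ∀ i : Fin n, ahat (s, i) = ahat (t, i)) →
      ∀ Y Z : Matrix (Fin n) (Fin n) ℝ, Y.IsSymm → Z.IsSymm →
      P = (1 : Matrix (Fin k) (Fin k) ℝ) ⊗ₖ Y +
        ((Matrix.of fun _ _ => (1 : ℝ)) - (1 : Matrix (Fin k) (Fin k) ℝ)) ⊗ₖ Z →
      ∀ l, 1 ≤ l → l ≤ k →
      Filter.Tendsto (fun C =>
          (Wstar l C - ahat ⬝ᵥ P.mulVec ahat) / (Wstar k C - ahat ⬝ᵥ P.mulVec ahat))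
        (nhdsWithin 0 (Set.Ioi 0)) (nhds (Real.sqrt ((l : ℝ) / (k : ℝ))))) := by
  have hrate : ∀ l, 1 ≤ l → l ≤ k →
      Tendsto (fun C => (Wstar l C - ahat ⬝ᵥ P *ᵥ ahat) / √C) (𝓝[>] 0)
        (𝓝 (2 * √(∑ pr : Fin k × Fin n,
          if (pr.1 : ℕ) < l then (P *ᵥ ahat) pr ^ 2 else 0))) := fun l hl hlk =>
    tendsto_sub_div_sqrt_of_isGreatest_perturbedValues hP fun C hC => by
      simpa only [perturbedValues, not_lt] using hW l C hl hlk hC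
  refine ⟨hrate, fun hahat Y Z _ _ hPYZ l hl hlk => ?_⟩
  have hb : IsBlockConst (P *ᵥ ahat) := hPYZ ▸ isBlockConst_kronecker_mulVec Y Z hahat
  let s₀ : Fin k := ⟨0, hk⟩
  have hS := sum_sq_pos_of_isBlockConst hb hPa s₀
  have hrate_l := hrate l hl hlk
  have hrate_k := hrate k hk le_rfl
  rw [sum_ite_fst_lt_sq_of_isBlockConst hb s₀ hlk] at hrate_l
  rw [sum_ite_fst_lt_sq_of_isBlockConst hb s₀ le_rfl] at hrate_k
  have hkS : (0 : ℝ) < k * ∑ i, (P *ᵥ ahat) (s₀, i) ^ 2 := mul_pos (by exact_mod_cast hk) hS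
  convert hrate_l.div_of_div hrate_k (by positivity)
    (eventually_mem_nhdsWithin.mono fun C (hC : 0 < C) => (Real.sqrt_pos.2 hC).ne') using 2
  rw [mul_div_mul_left _ _ two_ne_zero, ← Real.sqrt_div' _ hkS.le, mul_div_mul_right _ _ hS.ne']
end
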